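/- arXiv:2201.02346 — 7 statements merged into one kernel-verified Lean document; each statement's English description precedes it below -/
import Mathlib

section
/- Let S be a semigroup. The intersection ideal graph Γ(S) is disconnected if and only if S contains at least two minimal left ideals and every nontrivial left ideal of S is both a minimal left ideal and a maximal left ideal of S. -/
/-- `I` is a left ideal of the semigroup `S`: a nonempty subset closed under
left multiplication by arbitrary elements of `S`. -/
def IsLeftIdeal (S : Type*) [Semigroup S] (I : Set S) : Prop :=
  I.Nonempty ∧ ∀ s : S, ∀ x ∈ I, s * x ∈ I

/-- `I` is a nontrivial left ideal of `S`: a left ideal with `I ≠ S`. -/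
def IsNontrivialLeftIdeal (S : Type*) [Semigroup S] (I : Set S) : Prop :=
  IsLeftIdeal S I ∧ I ≠ Set.univ

/-- `I` is a minimal left ideal of `S`: a nontrivial left ideal properly
containing no left ideal of `S`. -/
def IsMinimalLeftIdeal (S : Type*) [Semigroup S] (I : Set S) : Prop :=
  IsNontrivialLeftIdeal S I ∧ ∀ J : Set S, IsLeftIdeal S J → ¬ J ⊂ I

/-- `I` is a maximal left ideal of `S`: a nontrivial left ideal not properly
contained in any nontrivial left ideal of `S`. -/
def IsMaximalLeftIdeal (S : Type*) [Semigroup S] (I : Set S) : Prop :=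
  IsNontrivialLeftIdeal S I ∧ ∀ J : Set S, IsNontrivialLeftIdeal S J → ¬ I ⊂ J

/-- The intersection ideal graph `Γ(S)`: vertices are the nontrivial left ideals of `S`,
two distinct vertices being adjacent iff their intersection is nonempty. -/
def idealGraph (S : Type*) [Semigroup S] :
    SimpleGraph {I : Set S // IsNontrivialLeftIdeal S I} where
  Adj I J := I ≠ J ∧ (I.1 ∩ J.1).Nonempty
  symm := by
    constructor
    rintro I J ⟨h1, h2⟩
    exact ⟨h1.symm, by rwa [Set.inter_comm]⟩
  loopless := by constructor; rintro I ⟨h1, -⟩; exact h1 rfl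

/-!
If `A` and `B` are vertices of `Γ(S)` in different components, then `A ∩ B = ∅`, and
`A ∪ B = S` since otherwise `A ∪ B` would be a vertex meeting both; so `A = Bᶜ`. Applied to an
arbitrary vertex, this leaves `A` and `B = Aᶜ` as the only nontrivial left ideals, which are then
pairwise disjoint. Pairwise disjointness of the nontrivial left ideals makes each of them minimal
and maximal, and conversely follows from minimality (a nonempty intersection is a smaller left
ideal); it says exactly that `Γ(S)` has no edges.
-/

namespace IsLeftIdeal

variable {S : Type*} [Semigroup S] {I J : Set S}

theorem union (hI : IsLeftIdeal S I) (hJ : IsLeftIdeal S J) : IsLeftIdeal S (I ∪ J) :=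
  ⟨hI.1.mono Set.subset_union_left, fun s x hx => hx.imp (hI.2 s x) (hJ.2 s x)⟩

theorem inter (hI : IsLeftIdeal S I) (hJ : IsLeftIdeal S J) (h : (I ∩ J).Nonempty) :
    IsLeftIdeal S (I ∩ J) :=
  ⟨h, fun s x hx => ⟨hI.2 s x hx.1, hJ.2 s x hx.2⟩⟩

end IsLeftIdeal

section PairwiseDisjoint

variable {S : Type*} [Semigroup S]

theorem IsNontrivialLeftIdeal.of_ssubset {I J : Set S} (hJ : IsNontrivialLeftIdeal S J)
    (hI : IsLeftIdeal S I) (hIJ : I ⊂ J) : IsNontrivialLeftIdeal S I :=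
  ⟨hI, fun h => hJ.2 (Set.univ_subset_iff.mp (h ▸ hIJ.1))⟩

theorem not_ssubset_of_pairwise_disjoint
    (hdisj : {I : Set S | IsNontrivialLeftIdeal S I}.Pairwise Disjoint) {I J : Set S}
    (hI : IsNontrivialLeftIdeal S I) (hJ : IsNontrivialLeftIdeal S J) : ¬ I ⊂ J := fun hIJ =>
  hI.1.1.ne_empty ((hdisj hI hJ hIJ.ne).eq_bot_of_le hIJ.1)

theorem isMinimalLeftIdeal_of_pairwise_disjoint
    (hdisj : {I : Set S | IsNontrivialLeftIdeal S I}.Pairwise Disjoint) {I : Set S}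
    (hI : IsNontrivialLeftIdeal S I) : IsMinimalLeftIdeal S I :=
  ⟨hI, fun _ hJ hJI => not_ssubset_of_pairwise_disjoint hdisj (hI.of_ssubset hJ hJI) hI hJI⟩

theorem isMaximalLeftIdeal_of_pairwise_disjoint
    (hdisj : {I : Set S | IsNontrivialLeftIdeal S I}.Pairwise Disjoint) {I : Set S}
    (hI : IsNontrivialLeftIdeal S I) : IsMaximalLeftIdeal S I :=
  ⟨hI, fun _ hJ => not_ssubset_of_pairwise_disjoint hdisj hI hJ⟩

theorem IsMinimalLeftIdeal.disjoint {I J : Set S} (hI : IsMinimalLeftIdeal S I)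
    (hJ : IsMinimalLeftIdeal S J) (hIJ : I ≠ J) : Disjoint I J := by
  by_contra hmeet
  have hIJ_ideal := hI.1.1.inter hJ.1.1 (Set.not_disjoint_iff_nonempty_inter.mp hmeet)
  have hsub : I ⊆ J := by
    by_contra hIJ'
    exact hI.2 _ hIJ_ideal ⟨Set.inter_subset_left, fun h => hIJ' fun _ hx => (h hx).2⟩
  exact hJ.2 I hI.1.1 (hsub.ssubset_of_ne hIJ)

end PairwiseDisjoint

section IdealGraph

variable {S : Type*} [Semigroup S]

theorem idealGraph_reachable_of_inter_nonempty {I J : {I : Set S // IsNontrivialLeftIdeal S I}}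
    (h : (I.1 ∩ J.1).Nonempty) : (idealGraph S).Reachable I J := by
  rcases eq_or_ne I J with rfl | hIJ
  · rfl
  · exact SimpleGraph.Adj.reachable ⟨hIJ, h⟩

theorem idealGraph_reachable_of_union_ne_univ {I J : {I : Set S // IsNontrivialLeftIdeal S I}}
    (h : I.1 ∪ J.1 ≠ Set.univ) : (idealGraph S).Reachable I J := by
  let U : {I : Set S // IsNontrivialLeftIdeal S I} := ⟨I.1 ∪ J.1, I.2.1.union J.2.1, h⟩
  obtain ⟨x, hx⟩ := I.2.1.1
  obtain ⟨y, hy⟩ := J.2.1.1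
  exact (idealGraph_reachable_of_inter_nonempty (J := U) ⟨x, hx, .inl hx⟩).trans
    (idealGraph_reachable_of_inter_nonempty ⟨y, .inr hy, hy⟩)

theorem eq_compl_of_not_reachable {I J : {I : Set S // IsNontrivialLeftIdeal S I}}
    (h : ¬ (idealGraph S).Reachable I J) : I.1 = J.1ᶜ := by
  have hdisj : Disjoint I.1 J.1 := Set.disjoint_iff_inter_eq_empty.mpr
    (Set.not_nonempty_iff_eq_empty.mp (mt idealGraph_reachable_of_inter_nonempty h))
  have hcodisj : Codisjoint I.1 J.1 := codisjoint_iff.mpr (not_not.mp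
    (mt idealGraph_reachable_of_union_ne_univ h))
  exact IsCompl.eq_compl ⟨hdisj, hcodisj⟩

theorem eq_or_eq_of_not_reachable {A B : {I : Set S // IsNontrivialLeftIdeal S I}}
    (hAB : ¬ (idealGraph S).Reachable A B) (K : {I : Set S // IsNontrivialLeftIdeal S I}) :
    K.1 = A.1 ∨ K.1 = B.1 := by
  by_cases hAK : (idealGraph S).Reachable A K
  · have hKB : ¬ (idealGraph S).Reachable K B := fun hKB => hAB (hAK.trans hKB)
    exact .inl ((eq_compl_of_not_reachable hKB).trans (eq_compl_of_not_reachable hAB).symm)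
  · exact .inr ((eq_compl_of_not_reachable (hAK ∘ .symm)).trans
      (compl_eq_comm.mp (eq_compl_of_not_reachable hAB).symm))

theorem pairwise_disjoint_of_not_reachable {A B : {I : Set S // IsNontrivialLeftIdeal S I}}
    (hAB : ¬ (idealGraph S).Reachable A B) :
    {I : Set S | IsNontrivialLeftIdeal S I}.Pairwise Disjoint := by
  have hdisj : Disjoint A.1 B.1 := by
    rw [eq_compl_of_not_reachable hAB]
    exact disjoint_compl_left
  intro I hI J hJ hIJ
  obtain rfl | rfl := eq_or_eq_of_not_reachable hAB ⟨I, hI⟩ <;>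
    obtain rfl | rfl := eq_or_eq_of_not_reachable hAB ⟨J, hJ⟩
  exacts [absurd rfl hIJ, hdisj, hdisj.symm, absurd rfl hIJ]

theorem idealGraph_eq_bot_of_pairwise_disjoint
    (hdisj : {I : Set S | IsNontrivialLeftIdeal S I}.Pairwise Disjoint) : idealGraph S = ⊥ :=
  SimpleGraph.eq_bot_iff_forall_not_adj.mpr fun I J ⟨hIJ, hmeet⟩ =>
    Set.not_disjoint_iff_nonempty_inter.mpr hmeet
      (hdisj I.2 J.2 fun h => hIJ (Subtype.ext h))

end IdealGraph

/-- `Γ(S)` is disconnected iff `S` contains at least two minimal left ideals and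
every nontrivial left ideal of `S` is both minimal and maximal. -/
theorem idealGraph_disconnected_iff (S : Type*) [Semigroup S] :
    (Nonempty {I : Set S // IsNontrivialLeftIdeal S I} ∧ ¬ (idealGraph S).Connected) ↔
      ((∃ I J : Set S, IsMinimalLeftIdeal S I ∧ IsMinimalLeftIdeal S J ∧ I ≠ J) ∧
        ∀ I : Set S, IsNontrivialLeftIdeal S I →
          IsMinimalLeftIdeal S I ∧ IsMaximalLeftIdeal S I) := by
  constructor
  · rintro ⟨hne, hdisconn⟩
    obtain ⟨A, B, hAB⟩ : ∃ A B, ¬ (idealGraph S).Reachable A B := by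
      simpa [SimpleGraph.connected_iff, SimpleGraph.Preconnected, hne] using hdisconn
    have hdisj := pairwise_disjoint_of_not_reachable hAB
    exact ⟨⟨A, B, isMinimalLeftIdeal_of_pairwise_disjoint hdisj A.2,
      isMinimalLeftIdeal_of_pairwise_disjoint hdisj B.2, fun h => hAB (Subtype.ext h ▸ .refl _)⟩,
      fun I hI => ⟨isMinimalLeftIdeal_of_pairwise_disjoint hdisj hI,
        isMaximalLeftIdeal_of_pairwise_disjoint hdisj hI⟩⟩
  · rintro ⟨⟨I, J, hI, hJ, hIJ⟩, hall⟩
    have hdisj : {I : Set S | IsNontrivialLeftIdeal S I}.Pairwise Disjoint :=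
      fun K hK L hL => (hall K hK).1.disjoint (hall L hL).1
    refine ⟨⟨⟨I, hI.1⟩⟩, fun hconn => hIJ ?_⟩
    have hreach := hconn.preconnected ⟨I, hI.1⟩ ⟨J, hJ.1⟩
    rw [idealGraph_eq_bot_of_pairwise_disjoint hdisj, SimpleGraph.reachable_bot] at hreach
    exact congrArg Subtype.val hreach
end

section
/- Let S be a semigroup. If the intersection ideal graph Γ(S) is connected, then its diameter is at most 2; that is, any two distinct nontrivial left ideals of S are joined in Γ(S) by a path of length at most 2. -/
/-!
Two nontrivial left ideals `I`, `J` are at distance at most `2` as soon as some vertex `K` meets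
both. If `I ∩ J ≠ ∅` take `K = I`; if `I ∪ J ≠ S` take `K = I ∪ J`. Otherwise `I` and `J`
partition `S`, and a path from `I` to `J` must leave the vertices disjoint from `J`: its first
vertex meeting `J` follows one contained in `I`, so it meets `I` as well.
-/

theorem IsLeftIdeal.union_s4 {S : Type*} [Semigroup S] {I J : Set S}
    (hI : IsLeftIdeal S I) (hJ : IsLeftIdeal S J) : IsLeftIdeal S (I ∪ J) := by
  refine ⟨hI.1.mono Set.subset_union_left, ?_⟩
  rintro s x (hx | hx)
  · exact Or.inl (hI.2 s x hx)
  · exact Or.inr (hJ.2 s x hx)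

namespace idealGraph

variable {S : Type*} [Semigroup S]

theorem edist_le_one_of_inter_nonempty {I J : {I : Set S // IsNontrivialLeftIdeal S I}}
    (hIJ : (I.1 ∩ J.1).Nonempty) : (idealGraph S).edist I J ≤ 1 := by
  rw [SimpleGraph.edist_le_one_iff_adj_or_eq]
  by_cases h : I = J
  · exact Or.inr h
  · exact Or.inl ⟨h, hIJ⟩

theorem exists_inter_nonempty_of_union_eq_univ (hS : (idealGraph S).Connected)
    {I J : {I : Set S // IsNontrivialLeftIdeal S I}} (hdisj : ¬ (I.1 ∩ J.1).Nonempty)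
    (hcover : I.1 ∪ J.1 = Set.univ) :
    ∃ K : {I : Set S // IsNontrivialLeftIdeal S I},
      (I.1 ∩ K.1).Nonempty ∧ (K.1 ∩ J.1).Nonempty := by
  obtain ⟨p⟩ := hS I J
  obtain ⟨⟨⟨U, K⟩, hUK⟩, -, hU, hK⟩ :=
    p.exists_boundary_dart {K | ¬ (K.1 ∩ J.1).Nonempty} hdisj (by simpa using J.2.1.1)
  have hUI : U.1 ⊆ I.1 := fun x hx =>
    (hcover ▸ Set.mem_univ x : x ∈ I.1 ∪ J.1).resolve_right fun hxJ => hU ⟨x, hx, hxJ⟩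
  obtain ⟨x, hxU, hxK⟩ := hUK.2
  exact ⟨K, ⟨x, hUI hxU, hxK⟩, not_not.mp hK⟩

theorem exists_inter_nonempty (hS : (idealGraph S).Connected)
    (I J : {I : Set S // IsNontrivialLeftIdeal S I}) :
    ∃ K : {I : Set S // IsNontrivialLeftIdeal S I},
      (I.1 ∩ K.1).Nonempty ∧ (K.1 ∩ J.1).Nonempty := by
  by_cases hIJ : (I.1 ∩ J.1).Nonempty
  · exact ⟨I, by simpa using I.2.1.1, hIJ⟩
  by_cases hcover : I.1 ∪ J.1 = Set.univ
  · exact exists_inter_nonempty_of_union_eq_univ hS hIJ hcover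
  refine ⟨⟨I.1 ∪ J.1, I.2.1.union_s4 J.2.1, hcover⟩, ?_, ?_⟩
  · obtain ⟨x, hx⟩ := I.2.1.1
    exact ⟨x, hx, Or.inl hx⟩
  · obtain ⟨x, hx⟩ := J.2.1.1
    exact ⟨x, Or.inr hx, hx⟩

end idealGraph

/-- If `Γ(S)` is connected then its diameter is at most `2`: any two vertices are
joined by a path of length at most `2`. -/
theorem idealGraph_ediam_le_two (S : Type*) [Semigroup S]
    (h : (idealGraph S).Connected) :
    (idealGraph S).ediam ≤ 2 := by
  rw [SimpleGraph.ediam_le_iff]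
  intro I J
  obtain ⟨K, hIK, hKJ⟩ := idealGraph.exists_inter_nonempty h I J
  calc (idealGraph S).edist I J
      ≤ (idealGraph S).edist I K + (idealGraph S).edist K J := SimpleGraph.edist_triangle
    _ ≤ 1 + 1 := add_le_add (idealGraph.edist_le_one_of_inter_nonempty hIK)
        (idealGraph.edist_le_one_of_inter_nonempty hKJ)
    _ = 2 := by norm_num
end

section
/- Let S be a semigroup having at least one minimal left ideal. Then the intersection ideal graph Γ(S) is a complete graph if and only if S has a unique minimal left ideal. -/
/-!
Two minimal left ideals that meet contain their intersection, a left ideal, hence coincide;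
so completeness of `Γ(S)` forces uniqueness. Conversely, if `M` is a minimal left ideal and
`x` lies in a nontrivial left ideal `I`, then `M x ⊆ I` is again a minimal left ideal, so
`M x = M` when `M` is the only one: every nontrivial left ideal contains `M`, and any two meet.
-/

section

variable {S : Type*} [Semigroup S]

theorem IsLeftIdeal.inter_s5 {I J : Set S} (hI : IsLeftIdeal S I) (hJ : IsLeftIdeal S J)
    (hIJ : (I ∩ J).Nonempty) : IsLeftIdeal S (I ∩ J) :=
  ⟨hIJ, fun s _ hx => ⟨hI.2 s _ hx.1, hJ.2 s _ hx.2⟩⟩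

theorem IsLeftIdeal.image_mul_right {I : Set S} (hI : IsLeftIdeal S I) (x : S) :
    IsLeftIdeal S ((· * x) '' I) := by
  refine ⟨hI.1.image _, ?_⟩
  rintro s _ ⟨m, hm, rfl⟩
  exact ⟨s * m, hI.2 s m hm, mul_assoc s m x⟩

theorem IsLeftIdeal.image_mul_right_subset {I : Set S} (hI : IsLeftIdeal S I) {M : Set S}
    {x : S} (hx : x ∈ I) : (· * x) '' M ⊆ I := by
  rintro _ ⟨m, -, rfl⟩
  exact hI.2 m x hx

namespace IsMinimalLeftIdeal

theorem eq_of_subset {M J : Set S} (hM : IsMinimalLeftIdeal S M) (hJ : IsLeftIdeal S J)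
    (hJM : J ⊆ M) : J = M :=
  by_contra fun hne => hM.2 J hJ (hJM.ssubset_of_ne hne)

theorem eq_of_inter_nonempty {M N : Set S} (hM : IsMinimalLeftIdeal S M)
    (hN : IsMinimalLeftIdeal S N) (hMN : (M ∩ N).Nonempty) : M = N := by
  have hinter := hM.1.1.inter_s5 hN.1.1 hMN
  exact (hM.eq_of_subset hinter Set.inter_subset_left).symm.trans
    (hN.eq_of_subset hinter Set.inter_subset_right)

theorem image_mul_right {M : Set S} (hM : IsMinimalLeftIdeal S M) {x : S}
    (hx : (· * x) '' M ≠ Set.univ) : IsMinimalLeftIdeal S ((· * x) '' M) := by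
  refine ⟨⟨hM.1.1.image_mul_right x, hx⟩, fun J hJ hJMx => hJMx.2 ?_⟩
  -- the preimage of `J` in `M` is a left ideal, hence all of `M`
  set K : Set S := {m ∈ M | m * x ∈ J}
  have hK : IsLeftIdeal S K := by
    refine ⟨?_, fun s m ⟨hm, hmx⟩ => ⟨hM.1.1.2 s m hm, ?_⟩⟩
    · obtain ⟨j, hj⟩ := hJ.1
      obtain ⟨m, hm, rfl⟩ := hJMx.1 hj
      exact ⟨m, hm, hj⟩
    · rw [mul_assoc]
      exact hJ.2 s _ hmx
  have hKM : K = M := hM.eq_of_subset hK fun _ hm => hm.1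
  rintro _ ⟨m, hm, rfl⟩
  exact (hKM ▸ hm : m ∈ K).2

theorem subset_of_unique {M : Set S} (hM : IsMinimalLeftIdeal S M)
    (huniq : ∀ N, IsMinimalLeftIdeal S N → N = M) {I : Set S}
    (hI : IsNontrivialLeftIdeal S I) : M ⊆ I := by
  obtain ⟨x, hx⟩ := hI.1.1
  have hMxI := hI.1.image_mul_right_subset (M := M) hx
  have hMx : (· * x) '' M ≠ Set.univ := fun h => hI.2 (Set.univ_subset_iff.1 (h ▸ hMxI))
  exact huniq _ (hM.image_mul_right hMx) ▸ hMxI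

end IsMinimalLeftIdeal

end

/-- Let `S` have a minimal left ideal. Then `Γ(S)` is complete iff `S` has a unique
minimal left ideal. -/
theorem idealGraph_complete_iff_unique_minimal (S : Type*) [Semigroup S]
    (h : ∃ I : Set S, IsMinimalLeftIdeal S I) :
    (∀ u v : {I : Set S // IsNontrivialLeftIdeal S I}, u ≠ v → (idealGraph S).Adj u v) ↔
      (∃! I : Set S, IsMinimalLeftIdeal S I) := by
  obtain ⟨M, hM⟩ := h
  constructor
  · intro hcomplete
    refine ⟨M, hM, fun N hN => by_contra fun hNM => ?_⟩
    have hmeet := (hcomplete ⟨N, hN.1⟩ ⟨M, hM.1⟩ (by simpa using hNM)).2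
    exact hNM (hN.eq_of_inter_nonempty hM hmeet)
  · rintro ⟨M', hM', huniq⟩ u v huv
    obtain ⟨m, hm⟩ := hM'.1.1.1
    exact ⟨huv, m, hM'.subset_of_unique huniq u.2 hm, hM'.subset_of_unique huniq v.2 hm⟩
end

section
/- Let S be a semigroup with exactly n minimal left ideals I₁, …, Iₙ (1 ≤ n < ∞), and suppose that I₁ ∪ I₂ ∪ ⋯ ∪ Iₙ ≠ S. Then the domination number of the intersection ideal graph Γ(S) equals 1. -/
/-- A dominating set of vertices of `Γ(S)`. -/
def IsDomSet (S : Type*) [Semigroup S]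
    (D : Set {I : Set S // IsNontrivialLeftIdeal S I}) : Prop :=
  ∀ v ∉ D, ∃ u ∈ D, (idealGraph S).Adj v u

/-- The domination number of `Γ(S)`: the minimum cardinality of a dominating set. -/
noncomputable def domNumber (S : Type*) [Semigroup S] : ℕ∞ :=
  sInf {k : ℕ∞ | ∃ D : Set {I : Set S // IsNontrivialLeftIdeal S I},
    IsDomSet S D ∧ D.encard = k}

/-!
If `I` is a minimal left ideal and `J` is any left ideal containing `j`, then `I j ⊆ J` and
`I j` is again a minimal left ideal (a left ideal `L ⊊ I j` would pull back to the left ideal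
`{a ∈ I | a j ∈ L} = I`). So every nontrivial left ideal meets the union `U` of the minimal
left ideals. Given that a minimal left ideal exists, `U` is a left ideal, and since `U ≠ S` it
is a vertex of `Γ(S)` adjacent to all others; hence `{U}` is a dominating set.
-/

namespace IsLeftIdeal

variable {S : Type*} [Semigroup S] {I J L : Set S}

theorem image_mul_right_s10 (hI : IsLeftIdeal S I) (j : S) : IsLeftIdeal S ((· * j) '' I) := by
  refine ⟨hI.1.image _, ?_⟩
  rintro s _ ⟨a, ha, rfl⟩
  exact ⟨s * a, hI.2 s a ha, mul_assoc s a j⟩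

theorem image_mul_right_subset_s10 (hJ : IsLeftIdeal S J) {j : S} (hj : j ∈ J) :
    (· * j) '' I ⊆ J := by
  rintro _ ⟨a, -, rfl⟩
  exact hJ.2 a j hj

theorem sep_mul_right_mem (hI : IsLeftIdeal S I) (hL : IsLeftIdeal S L) {j : S}
    (hne : {a ∈ I | a * j ∈ L}.Nonempty) : IsLeftIdeal S {a ∈ I | a * j ∈ L} := by
  refine ⟨hne, ?_⟩
  rintro s a ⟨haI, haL⟩
  exact ⟨hI.2 s a haI, by rw [mul_assoc]; exact hL.2 s _ haL⟩

end IsLeftIdeal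

theorem isLeftIdeal_sUnion {S : Type*} [Semigroup S] {M : Set (Set S)}
    (hM : ∀ I ∈ M, IsLeftIdeal S I) (hne : M.Nonempty) : IsLeftIdeal S (⋃₀ M) := by
  obtain ⟨I, hI⟩ := hne
  refine ⟨(hM I hI).1.mono (Set.subset_sUnion_of_mem hI), ?_⟩
  rintro s x ⟨K, hK, hxK⟩
  exact ⟨K, hK, (hM K hK).2 s x hxK⟩

theorem IsMinimalLeftIdeal.image_mul_right_s10 {S : Type*} [Semigroup S] {I : Set S}
    (hI : IsMinimalLeftIdeal S I) (j : S) (hne : (· * j) '' I ≠ Set.univ) :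
    IsMinimalLeftIdeal S ((· * j) '' I) := by
  refine ⟨⟨hI.1.1.image_mul_right_s10 j, hne⟩, fun L hL hLI => ?_⟩
  have hpre : IsLeftIdeal S {a ∈ I | a * j ∈ L} := by
    refine hI.1.1.sep_mul_right_mem hL ?_
    obtain ⟨_, hy⟩ := hL.1
    obtain ⟨a, ha, rfl⟩ := hLI.1 hy
    exact ⟨a, ha, hy⟩
  have hpre_eq : {a ∈ I | a * j ∈ L} = I := by
    by_contra h
    exact hI.2 _ hpre ((Set.sep_subset _ _).ssubset_of_ne h)
  refine hLI.2 ?_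
  rintro _ ⟨a, ha, rfl⟩
  rw [← hpre_eq] at ha
  exact ha.2

theorem IsNontrivialLeftIdeal.exists_isMinimalLeftIdeal_subset {S : Type*} [Semigroup S]
    {I J : Set S} (hJ : IsNontrivialLeftIdeal S J) (hI : IsMinimalLeftIdeal S I) :
    ∃ K, IsMinimalLeftIdeal S K ∧ K ⊆ J := by
  obtain ⟨j, hj⟩ := hJ.1.1
  have hsub := hJ.1.image_mul_right_subset_s10 (I := I) hj
  exact ⟨_, hI.image_mul_right_s10 j fun h => hJ.2 (Set.eq_univ_of_univ_subset (h ▸ hsub)), hsub⟩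

theorem domNumber_eq_one_of_isDomSet_singleton {S : Type*} [Semigroup S]
    (u : {I : Set S // IsNontrivialLeftIdeal S I}) (hu : IsDomSet S {u}) :
    domNumber S = 1 := by
  refine le_antisymm (sInf_le ⟨{u}, hu, Set.encard_singleton u⟩) (le_sInf ?_)
  rintro _ ⟨D, hD, rfl⟩
  rw [Order.one_le_iff_ne_zero, Set.encard_ne_zero]
  rcases D.eq_empty_or_nonempty with rfl | hD_ne
  · obtain ⟨w, hw, -⟩ := hD u (Set.notMem_empty u)
    exact absurd hw (Set.notMem_empty w)
  · exact hD_ne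

/-- If `S` has exactly `n` minimal left ideals (`1 ≤ n < ∞`) whose union is not `S`,
then the domination number of `Γ(S)` equals `1`. -/
theorem domNumber_eq_one (S : Type*) [Semigroup S] (n : ℕ) (hn : 1 ≤ n)
    (hcard : {I : Set S | IsMinimalLeftIdeal S I}.encard = n)
    (hunion : ⋃₀ {I : Set S | IsMinimalLeftIdeal S I} ≠ Set.univ) :
    domNumber S = 1 := by
  obtain ⟨I₀, hI₀⟩ : {I : Set S | IsMinimalLeftIdeal S I}.Nonempty := by
    rw [← Set.encard_ne_zero, hcard]
    exact_mod_cast Nat.one_le_iff_ne_zero.mp hn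
  let U : {I : Set S // IsNontrivialLeftIdeal S I} :=
    ⟨_, isLeftIdeal_sUnion (fun I hI => hI.1.1) ⟨I₀, hI₀⟩, hunion⟩
  refine domNumber_eq_one_of_isDomSet_singleton U fun J hJ => ⟨U, rfl, fun h => hJ (h ▸ rfl), ?_⟩
  obtain ⟨K, hK, hKJ⟩ := J.2.exists_isMinimalLeftIdeal_subset hI₀
  obtain ⟨x, hx⟩ := hK.1.1.1
  exact ⟨x, hKJ hx, K, hK, hx⟩
end

section
/- Let S be a semigroup with exactly n minimal left ideals I₁, …, Iₙ (2 ≤ n < ∞), and suppose that S = I₁ ∪ I₂ ∪ ⋯ ∪ Iₙ. Then the domination number of the intersection ideal graph Γ(S) equals 2. -/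
/-
A minimal left ideal meets a left ideal only by being contained in it (their intersection is a
left ideal), so distinct minimal left ideals are disjoint. Since they cover `S`, the complement of
one of them, `I`, is the union of the others and hence a nontrivial left ideal; every nontrivial
left ideal meets `I` or `Iᶜ`, so `{I, Iᶜ}` dominates `Γ(S)`. No single vertex `W` dominates: every
minimal left ideal would equal `W` or meet it, hence lie in `W`, forcing `W = S`.
-/

namespace IsMinimalLeftIdeal

variable {S : Type*} [Semigroup S] {I J : Set S}

theorem subset_of_inter_nonempty (hI : IsMinimalLeftIdeal S I) (hJ : IsLeftIdeal S J)
    (h : (J ∩ I).Nonempty) : I ⊆ J := by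
  have hJI : IsLeftIdeal S (J ∩ I) :=
    ⟨h, fun s x hx => ⟨hJ.2 s x hx.1, hI.1.1.2 s x hx.2⟩⟩
  have hEq : J ∩ I = I := by
    by_contra hne
    exact hI.2 _ hJI (Set.inter_subset_right.ssubset_of_ne hne)
  exact hEq ▸ Set.inter_subset_left

theorem disjoint_s11 (hI : IsMinimalLeftIdeal S I) (hJ : IsMinimalLeftIdeal S J) (hne : I ≠ J) :
    Disjoint I J := by
  rw [Set.disjoint_iff_inter_eq_empty, ← Set.not_nonempty_iff_eq_empty]
  intro h
  refine hne (Set.Subset.antisymm ?_ ?_)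
  · exact hI.subset_of_inter_nonempty hJ.1.1 (Set.inter_comm I J ▸ h)
  · exact hJ.subset_of_inter_nonempty hI.1.1 h

theorem isLeftIdeal_compl (hunion : ⋃₀ {I : Set S | IsMinimalLeftIdeal S I} = Set.univ)
    (hI : IsMinimalLeftIdeal S I) : IsLeftIdeal S Iᶜ := by
  refine ⟨Set.nonempty_compl.mpr hI.1.2, fun s x hx => ?_⟩
  obtain ⟨K, hK, hxK⟩ : x ∈ ⋃₀ {I : Set S | IsMinimalLeftIdeal S I} := hunion ▸ trivial
  have hKI : K ≠ I := by rintro rfl; exact hx hxK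
  exact (hK.disjoint_s11 hI hKI).notMem_of_mem_left (hK.1.1.2 s x hxK)

theorem isNontrivialLeftIdeal_compl
    (hunion : ⋃₀ {I : Set S | IsMinimalLeftIdeal S I} = Set.univ)
    (hI : IsMinimalLeftIdeal S I) : IsNontrivialLeftIdeal S Iᶜ :=
  ⟨hI.isLeftIdeal_compl hunion, fun h => hI.1.1.1.ne_empty (compl_eq_top.mp h)⟩

end IsMinimalLeftIdeal

section Domination

variable {S : Type*} [Semigroup S]

theorem isDomSet_pair_of_union_eq_univ {I J : {I : Set S // IsNontrivialLeftIdeal S I}}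
    (h : I.1 ∪ J.1 = Set.univ) : IsDomSet S {I, J} := by
  intro V hV
  obtain ⟨x, hxV⟩ := V.2.1.1
  have hVI : V ≠ I := fun e => hV (e ▸ Set.mem_insert V {J})
  have hVJ : V ≠ J := fun e => hV (e ▸ Set.mem_insert_of_mem I rfl)
  rcases (h ▸ Set.mem_univ x : x ∈ I.1 ∪ J.1) with hxI | hxJ
  · exact ⟨I, Set.mem_insert I {J}, hVI, x, hxV, hxI⟩
  · exact ⟨J, Set.mem_insert_of_mem I rfl, hVJ, x, hxV, hxJ⟩

theorem ne_of_union_eq_univ {I J : {I : Set S // IsNontrivialLeftIdeal S I}}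
    (h : I.1 ∪ J.1 = Set.univ) : I ≠ J := by
  rintro rfl
  exact I.2.2 (Set.union_self I.1 ▸ h)

theorem IsMinimalLeftIdeal.subset_of_isDomSet_singleton {I : Set S}
    {W : {I : Set S // IsNontrivialLeftIdeal S I}} (hI : IsMinimalLeftIdeal S I)
    (hD : IsDomSet S {W}) : I ⊆ W.1 := by
  by_cases hIW : ⟨I, hI.1⟩ = W
  · exact hIW ▸ subset_rfl
  obtain ⟨U, hU, -, hmeet⟩ := hD ⟨I, hI.1⟩ hIW
  rw [Set.mem_singleton_iff] at hU
  subst hU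
  exact hI.subset_of_inter_nonempty U.2.1 (Set.inter_comm I U.1 ▸ hmeet)

theorem two_le_encard_of_isDomSet
    (hunion : ⋃₀ {I : Set S | IsMinimalLeftIdeal S I} = Set.univ) {I : Set S}
    (hI : IsMinimalLeftIdeal S I) {D : Set {I : Set S // IsNontrivialLeftIdeal S I}}
    (hD : IsDomSet S D) : 2 ≤ D.encard := by
  by_contra hlt
  rcases Set.encard_le_one_iff_eq.mp (ENat.lt_two_iff.mp (not_le.mp hlt)) with rfl | ⟨W, rfl⟩
  · obtain ⟨U, hU, -⟩ := hD ⟨I, hI.1⟩ (Set.notMem_empty _)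
    exact hU
  · refine W.2.2 (Set.eq_univ_of_univ_subset (hunion ▸ Set.sUnion_subset ?_))
    exact fun K hK => IsMinimalLeftIdeal.subset_of_isDomSet_singleton hK hD

end Domination

/-- If `S` has exactly `n` minimal left ideals (`2 ≤ n < ∞`) whose union is `S`,
then the domination number of `Γ(S)` equals `2`. -/
theorem domNumber_eq_two (S : Type*) [Semigroup S] (n : ℕ) (hn : 2 ≤ n)
    (hcard : {I : Set S | IsMinimalLeftIdeal S I}.encard = n)
    (hunion : ⋃₀ {I : Set S | IsMinimalLeftIdeal S I} = Set.univ) :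
    domNumber S = 2 := by
  obtain ⟨I, hI⟩ : {I : Set S | IsMinimalLeftIdeal S I}.Nonempty :=
    Set.nonempty_of_encard_ne_zero (by rw [hcard]; exact_mod_cast (by omega : n ≠ 0))
  let V : {I : Set S // IsNontrivialLeftIdeal S I} := ⟨I, hI.1⟩
  let W : {I : Set S // IsNontrivialLeftIdeal S I} := ⟨Iᶜ, hI.isNontrivialLeftIdeal_compl hunion⟩
  have hcover : V.1 ∪ W.1 = Set.univ := Set.union_compl_self I
  refine le_antisymm (sInf_le ⟨{V, W}, ?_, ?_⟩) (le_sInf ?_)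
  · exact isDomSet_pair_of_union_eq_univ hcover
  · exact Set.encard_pair (ne_of_union_eq_univ hcover)
  · rintro _ ⟨D, hD, rfl⟩
    exact two_le_encard_of_isDomSet hunion hI hD
end

section
/- Let S be a semigroup. If the intersection ideal graph Γ(S) is connected, then the set of maximal left ideals of S forms a clique in Γ(S); that is, any two distinct maximal left ideals of S have nonempty intersection. -/
/-! If two maximal left ideals `J`, `K` were disjoint, every nontrivial left ideal `L` meeting `J`
would satisfy `K ∪ L = S` by maximality of `K`, hence `J ⊆ L`, hence `L = J` by maximality of `J`.
So `J` would be an isolated vertex of `Γ(S)`, although `Γ(S)` is connected and has the second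
vertex `K`. -/

namespace IsLeftIdeal

variable {S : Type*} [Semigroup S] {A B : Set S}

theorem union_s15 (hA : IsLeftIdeal S A) (hB : IsLeftIdeal S B) : IsLeftIdeal S (A ∪ B) := by
  refine ⟨hA.1.mono Set.subset_union_left, ?_⟩
  rintro s x (hx | hx)
  · exact Or.inl (hA.2 s x hx)
  · exact Or.inr (hB.2 s x hx)

end IsLeftIdeal

namespace IsMaximalLeftIdeal

variable {S : Type*} [Semigroup S] {J K L : Set S}

theorem union_eq_univ (hJ : IsMaximalLeftIdeal S J) (hL : IsLeftIdeal S L) (hLJ : ¬ L ⊆ J) :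
    J ∪ L = Set.univ := by
  by_contra hne
  exact hJ.2 _ ⟨hJ.1.1.union_s15 hL, hne⟩ (Set.ssubset_union_left_iff.2 hLJ)

theorem eq_of_disjoint_of_inter_nonempty (hJ : IsMaximalLeftIdeal S J) (hK : IsMaximalLeftIdeal S K)
    (hJK : Disjoint J K) (hL : IsNontrivialLeftIdeal S L) (hLJ : (L ∩ J).Nonempty) : L = J := by
  obtain ⟨x, hxL, hxJ⟩ := hLJ
  have hKL : K ∪ L = Set.univ :=
    hK.union_eq_univ hL.1 fun hLK => Set.disjoint_left.1 hJK hxJ (hLK hxL)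
  have hJL : J ⊆ L := fun y hyJ =>
    (hKL ▸ Set.mem_univ y : y ∈ K ∪ L).resolve_left (Set.disjoint_left.1 hJK hyJ)
  exact ((Set.eq_or_ssubset_of_subset hJL).resolve_right (hJ.2 L hL)).symm

theorem isIsolated_idealGraph (hJ : IsMaximalLeftIdeal S J) (hK : IsMaximalLeftIdeal S K)
    (hJK : Disjoint J K) : (idealGraph S).IsIsolated ⟨J, hJ.1⟩ := by
  rintro L ⟨hne, hJL⟩
  exact hne (Subtype.ext (hJ.eq_of_disjoint_of_inter_nonempty hK hJK L.2 (Set.inter_comm J L ▸ hJL)).symm)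

end IsMaximalLeftIdeal

/-- If `Γ(S)` is connected, then the maximal left ideals of `S` form a clique: any two
distinct maximal left ideals intersect. -/
theorem maximal_ideals_clique (S : Type*) [Semigroup S]
    (h : (idealGraph S).Connected) :
    ∀ J K : Set S, IsMaximalLeftIdeal S J → IsMaximalLeftIdeal S K → J ≠ K →
      (J ∩ K).Nonempty := by
  intro J K hJ hK hne
  rw [← Set.not_disjoint_iff_nonempty_inter]
  intro hJK
  have : Nontrivial {I : Set S // IsNontrivialLeftIdeal S I} :=
    ⟨⟨J, hJ.1⟩, ⟨K, hK.1⟩, fun hJK' => hne (congrArg Subtype.val hJK')⟩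
  obtain ⟨L, hadj⟩ := h.preconnected.exists_adj_of_nontrivial ⟨J, hJ.1⟩
  exact hJ.isIsolated_idealGraph hK hJK L hadj
end

section
/- Let S be a semigroup that is the union of its n minimal left ideals, where 2 ≤ n < ∞. Then the automorphism group of the intersection ideal graph Γ(S) is isomorphic to the symmetric group Sₙ of degree n; in particular, |Aut(Γ(S))| = n!. -/
/-- The automorphism group of `Γ(S)`, i.e. the graph self-isomorphisms of `Γ(S)` under
composition. -/
instance idealGraphAutGroup (S : Type*) [Semigroup S] :
    Group ((idealGraph S) ≃g (idealGraph S)) where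
  mul f g := g.trans f
  one := SimpleGraph.Iso.refl
  inv := SimpleGraph.Iso.symm
  mul_assoc f g h := rfl
  one_mul f := rfl
  mul_one f := rfl
  inv_mul_cancel f := by
    have : f.trans f.symm = (SimpleGraph.Iso.refl : (idealGraph S) ≃g (idealGraph S)) := by
      exact DFunLike.ext _ _ fun v => f.toEquiv.symm_apply_apply v
    exact this

/-!
Minimal left ideals are pairwise disjoint, and a left ideal meeting a minimal one contains it.
Hence, when `S` is the union of its minimal left ideals, `I ↦ {M minimal | M ⊆ I}` identifies
the nontrivial left ideals with the nonempty proper subsets of the set of minimal left ideals,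
and `Γ(S)` with the intersection graph of these subsets.

In that graph two vertices meet iff they are equal or adjacent, so an automorphism preserves
"meeting", hence inclusion (`A ⊆ B` iff every vertex meeting `A` meets `B`), hence the
singletons, which are the minimal vertices. The induced permutation of the points then
determines the automorphism, and every permutation acts by taking images.
-/

open Set Function

abbrev NontrivialSubset (α : Type*) := {A : Set α // A.Nonempty ∧ A ≠ univ}

def subsetIntersectionGraph (α : Type*) : SimpleGraph (NontrivialSubset α) where
  Adj A B := A ≠ B ∧ (A.1 ∩ B.1).Nonempty
  symm := ⟨fun _ _ h => ⟨h.1.symm, inter_comm _ _ ▸ h.2⟩⟩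
  loopless := ⟨fun _ h => h.1 rfl⟩

def SimpleGraph.Iso.autCongr {V W : Type*} {G : SimpleGraph V} {H : SimpleGraph W}
    (e : G ≃g H) : (G ≃g G) ≃* (H ≃g H) where
  toFun f := (e.symm.trans f).trans e
  invFun f := (e.trans f).trans e.symm
  left_inv f := RelIso.ext fun v => by simp
  right_inv f := RelIso.ext fun w => by simp
  map_mul' f g := RelIso.ext fun w => by simp [RelIso.mul_apply]

namespace subsetIntersectionGraph

variable {α : Type*}

local notation "𝒢" => subsetIntersectionGraph α

lemma nontrivial_of_nontrivialSubset (A : NontrivialSubset α) : Nontrivial α := by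
  obtain ⟨a, ha⟩ := A.2.1
  obtain ⟨b, hb⟩ := ne_univ_iff_exists_notMem _ |>.1 A.2.2
  exact nontrivial_of_ne a b (ne_of_mem_of_not_mem ha hb)

def singletonVertex [Nontrivial α] (a : α) : NontrivialSubset α :=
  ⟨{a}, singleton_nonempty a, singleton_ne_univ a⟩

@[simp]
lemma coe_singletonVertex [Nontrivial α] (a : α) : (singletonVertex a).1 = {a} := rfl

lemma singletonVertex_injective [Nontrivial α] : Injective (singletonVertex (α := α)) :=
  fun _ _ h => singleton_eq_singleton_iff.1 (congrArg Subtype.val h)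

lemma inter_nonempty_iff_eq_or_adj {A B : NontrivialSubset α} :
    (A.1 ∩ B.1).Nonempty ↔ A = B ∨ (𝒢).Adj A B := by
  by_cases h : A = B
  · simp [h, B.2.1]
  · simp [h, subsetIntersectionGraph]

lemma inter_nonempty_map_iff (g : 𝒢 ≃g 𝒢) {A B : NontrivialSubset α} :
    ((g A).1 ∩ (g B).1).Nonempty ↔ (A.1 ∩ B.1).Nonempty := by
  simp only [inter_nonempty_iff_eq_or_adj, g.injective.eq_iff, g.map_adj_iff]

lemma subset_iff_forall_inter_nonempty {A B : NontrivialSubset α} :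
    A.1 ⊆ B.1 ↔
      ∀ C : NontrivialSubset α, (A.1 ∩ C.1).Nonempty → (B.1 ∩ C.1).Nonempty := by
  refine ⟨fun h C hAC => hAC.mono (inter_subset_inter_left _ h), fun h a ha => ?_⟩
  have := nontrivial_of_nontrivialSubset A
  exact inter_singleton_nonempty.1 (h (singletonVertex a) (inter_singleton_nonempty.2 ha))

lemma map_subset_map_iff (g : 𝒢 ≃g 𝒢) {A B : NontrivialSubset α} :
    (g A).1 ⊆ (g B).1 ↔ A.1 ⊆ B.1 := by
  rw [subset_iff_forall_inter_nonempty, subset_iff_forall_inter_nonempty, g.surjective.forall]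
  simp only [inter_nonempty_map_iff]

lemma exists_map_singletonVertex [Nontrivial α] (g : 𝒢 ≃g 𝒢) (a : α) :
    ∃ b, g (singletonVertex a) = singletonVertex b := by
  obtain ⟨b, hb⟩ := (g (singletonVertex a)).2.1
  refine ⟨b, ?_⟩
  have hsub : (g.symm (singletonVertex b)).1 ⊆ {a} := by
    rw [← coe_singletonVertex, ← map_subset_map_iff g, g.apply_symm_apply]
    exact singleton_subset_iff.2 hb
  have hb' : g.symm (singletonVertex b) = singletonVertex a :=
    Subtype.ext ((g.symm _).2.1.subset_singleton_iff.1 hsub)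
  rw [← hb', g.apply_symm_apply]

lemma exists_perm_map_eq_image (g : 𝒢 ≃g 𝒢) :
    ∃ σ : Equiv.Perm α, ∀ A, (g A).1 = σ '' A.1 := by
  cases isEmpty_or_nonempty (NontrivialSubset α) with
  | inl _ => exact ⟨1, fun A => isEmptyElim A⟩
  | inr hV =>
    have := nontrivial_of_nontrivialSubset hV.some
    choose p hp using exists_map_singletonVertex g
    choose q hq using exists_map_singletonVertex g.symm
    have hqp : LeftInverse q p := fun a =>
      singletonVertex_injective <| by rw [← hq, ← hp, g.symm_apply_apply]
    have hpq : RightInverse q p := fun b =>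
      singletonVertex_injective <| by rw [← hp, ← hq, g.apply_symm_apply]
    let σ : Equiv.Perm α := ⟨p, q, hqp, hpq⟩
    have hmem : ∀ A a, p a ∈ (g A).1 ↔ a ∈ A.1 := fun A a => by
      rw [← singleton_subset_iff, ← singleton_subset_iff (a := a), ← coe_singletonVertex,
        ← coe_singletonVertex, ← hp, map_subset_map_iff]
    refine ⟨σ, fun A => Set.ext fun b => ?_⟩
    obtain ⟨a, rfl⟩ := σ.surjective b
    rw [σ.injective.mem_set_image]
    exact hmem A a

def permGraphIso (σ : Equiv.Perm α) : 𝒢 ≃g 𝒢 where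
  toEquiv := (Equiv.Set.congr σ).subtypeEquiv fun A => by
    simp [σ.injective.image_injective.ne_iff' (image_univ_of_surjective σ.surjective)]
  map_rel_iff' := by
    simp [subsetIntersectionGraph, ← image_inter σ.injective, Subtype.ext_iff,
      σ.injective.image_injective.eq_iff]

@[simp]
lemma permGraphIso_apply_coe (σ : Equiv.Perm α) (A : NontrivialSubset α) :
    (permGraphIso σ A).1 = σ '' A.1 := rfl

def permToAut : Equiv.Perm α →* (𝒢 ≃g 𝒢) where
  toFun := permGraphIso
  map_one' := RelIso.ext fun A => Subtype.ext (by simp)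
  map_mul' σ τ := RelIso.ext fun A => Subtype.ext (by simp [image_image, RelIso.mul_apply])

lemma permToAut_injective : Injective (permToAut (α := α)) := by
  refine (injective_iff_map_eq_one _).2 fun σ hσ => Equiv.ext fun a => ?_
  by_contra h
  have := nontrivial_of_ne _ _ h
  have hσa := congrArg (fun g : 𝒢 ≃g 𝒢 => (g (singletonVertex a)).1) hσ
  exact h (by simpa [permToAut] using hσa)

lemma permToAut_surjective : Surjective (permToAut (α := α)) := fun g =>
  let ⟨σ, hσ⟩ := exists_perm_map_eq_image g
  ⟨σ, RelIso.ext fun A => Subtype.ext (hσ A).symm⟩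

noncomputable def autEquivPerm : (𝒢 ≃g 𝒢) ≃* Equiv.Perm α :=
  (MulEquiv.ofBijective permToAut ⟨permToAut_injective, permToAut_surjective⟩).symm

end subsetIntersectionGraph

section Semigroup

variable {S : Type*} [Semigroup S]

lemma IsMinimalLeftIdeal.subset_of_inter_nonempty_s19 {M I : Set S} (hM : IsMinimalLeftIdeal S M)
    (hI : IsLeftIdeal S I) (h : (M ∩ I).Nonempty) : M ⊆ I := by
  have hMI : IsLeftIdeal S (M ∩ I) :=
    ⟨h, fun s x hx => ⟨hM.1.1.2 s x hx.1, hI.2 s x hx.2⟩⟩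
  by_contra hsub
  exact hM.2 _ hMI (inter_subset_left.ssubset_of_ne fun h => hsub (h ▸ inter_subset_right))

lemma IsMinimalLeftIdeal.eq_of_inter_nonempty_s19 {M N : Set S} (hM : IsMinimalLeftIdeal S M)
    (hN : IsMinimalLeftIdeal S N) (h : (M ∩ N).Nonempty) : M = N :=
  (hM.subset_of_inter_nonempty_s19 hN.1.1 h).antisymm
    (hN.subset_of_inter_nonempty_s19 hM.1.1 (inter_comm M N ▸ h))

abbrev MinimalLeftIdeal (S : Type*) [Semigroup S] := {M : Set S // IsMinimalLeftIdeal S M}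

namespace MinimalLeftIdeal

lemma isLeftIdeal_biUnion {A : Set (MinimalLeftIdeal S)} (hA : A.Nonempty) :
    IsLeftIdeal S (⋃ M ∈ A, M.1) := by
  obtain ⟨M, hM⟩ := hA
  refine ⟨M.2.1.1.1.mono (subset_biUnion_of_mem hM), fun s x hx => ?_⟩
  obtain ⟨N, hN, hxN⟩ := mem_iUnion₂.1 hx
  exact mem_biUnion hN (N.2.1.1.2 s x hxN)

lemma biUnion_inter_biUnion_nonempty_iff {A B : Set (MinimalLeftIdeal S)} :
    ((⋃ M ∈ A, M.1) ∩ ⋃ M ∈ B, M.1).Nonempty ↔ (A ∩ B).Nonempty := by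
  constructor
  · rintro ⟨x, hxA, hxB⟩
    obtain ⟨M, hMA, hxM⟩ := mem_iUnion₂.1 hxA
    obtain ⟨N, hNB, hxN⟩ := mem_iUnion₂.1 hxB
    obtain rfl : M = N := Subtype.ext (M.2.eq_of_inter_nonempty_s19 N.2 ⟨x, hxM, hxN⟩)
    exact ⟨M, hMA, hNB⟩
  · rintro ⟨M, hMA, hMB⟩
    obtain ⟨x, hx⟩ := M.2.1.1.1
    exact ⟨x, mem_biUnion hMA hx, mem_biUnion hMB hx⟩

lemma subset_biUnion_iff_mem {A : Set (MinimalLeftIdeal S)} {M : MinimalLeftIdeal S} :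
    M.1 ⊆ ⋃ N ∈ A, N.1 ↔ M ∈ A := by
  refine ⟨fun h => ?_, fun h => subset_biUnion_of_mem (u := Subtype.val) h⟩
  obtain ⟨x, hx⟩ := M.2.1.1.1
  obtain ⟨N, hN, hxN⟩ := mem_iUnion₂.1 (h hx)
  rwa [Subtype.ext (M.2.eq_of_inter_nonempty_s19 N.2 ⟨x, hx, hxN⟩)]

lemma exists_minimalLeftIdeal_mem (hunion : ⋃₀ {I : Set S | IsMinimalLeftIdeal S I} = univ)
    (x : S) : ∃ M : MinimalLeftIdeal S, x ∈ M.1 := by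
  obtain ⟨M, hM, hx⟩ := mem_sUnion.1 (hunion ▸ mem_univ x)
  exact ⟨⟨M, hM⟩, hx⟩

lemma biUnion_minimal_subset_eq (hunion : ⋃₀ {I : Set S | IsMinimalLeftIdeal S I} = univ)
    {I : Set S} (hI : IsLeftIdeal S I) :
    ⋃ M ∈ {M : MinimalLeftIdeal S | M.1 ⊆ I}, M.1 = I := by
  refine (iUnion₂_subset fun (M : MinimalLeftIdeal S) (hM : M.1 ⊆ I) => hM).antisymm
    fun x hx => ?_
  obtain ⟨M, hxM⟩ := exists_minimalLeftIdeal_mem hunion x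
  exact mem_biUnion (M.2.subset_of_inter_nonempty_s19 hI ⟨x, hxM, hx⟩ : M.1 ⊆ I) hxM

lemma nonempty_setOf_minimal_subset (hunion : ⋃₀ {I : Set S | IsMinimalLeftIdeal S I} = univ)
    {I : Set S} (hI : IsLeftIdeal S I) : {M : MinimalLeftIdeal S | M.1 ⊆ I}.Nonempty := by
  obtain ⟨x, hx⟩ := hI.1
  obtain ⟨M, hxM⟩ := exists_minimalLeftIdeal_mem hunion x
  exact ⟨M, M.2.subset_of_inter_nonempty_s19 hI ⟨x, hxM, hx⟩⟩

lemma biUnion_eq_univ_iff (hunion : ⋃₀ {I : Set S | IsMinimalLeftIdeal S I} = univ)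
    {A : Set (MinimalLeftIdeal S)} : ⋃ M ∈ A, M.1 = univ ↔ A = univ := by
  refine ⟨fun h => eq_univ_of_forall fun M =>
    subset_biUnion_iff_mem.1 (h ▸ subset_univ _), ?_⟩
  rintro rfl
  refine eq_univ_of_forall fun x => ?_
  obtain ⟨M, hxM⟩ := exists_minimalLeftIdeal_mem hunion x
  exact mem_biUnion (mem_univ M) hxM

def nontrivialSubsetEquiv (hunion : ⋃₀ {I : Set S | IsMinimalLeftIdeal S I} = univ) :
    NontrivialSubset (MinimalLeftIdeal S) ≃ {I : Set S // IsNontrivialLeftIdeal S I} where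
  toFun A := ⟨⋃ M ∈ A.1, M.1, isLeftIdeal_biUnion A.2.1,
    (biUnion_eq_univ_iff hunion).not.2 A.2.2⟩
  invFun I := ⟨{M | M.1 ⊆ I.1}, nonempty_setOf_minimal_subset hunion I.2.1,
    fun h => I.2.2 (biUnion_minimal_subset_eq hunion I.2.1 ▸ (biUnion_eq_univ_iff hunion).2 h)⟩
  left_inv _ := Subtype.ext <| Set.ext fun _ => subset_biUnion_iff_mem
  right_inv I := Subtype.ext <| biUnion_minimal_subset_eq hunion I.2.1

@[simp]
lemma nontrivialSubsetEquiv_apply_coe (hunion : ⋃₀ {I : Set S | IsMinimalLeftIdeal S I} = univ)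
    (A : NontrivialSubset (MinimalLeftIdeal S)) :
    (nontrivialSubsetEquiv hunion A).1 = ⋃ M ∈ A.1, M.1 := rfl

def idealGraphIso (hunion : ⋃₀ {I : Set S | IsMinimalLeftIdeal S I} = univ) :
    subsetIntersectionGraph (MinimalLeftIdeal S) ≃g idealGraph S where
  toEquiv := nontrivialSubsetEquiv hunion
  map_rel_iff' := by
    simp [idealGraph, subsetIntersectionGraph, biUnion_inter_biUnion_nonempty_iff]

end MinimalLeftIdeal

end Semigroup

theorem aut_idealGraph_iso_symmGroup_general (S : Type*) [Semigroup S] (n : ℕ)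
    (hcard : {I : Set S | IsMinimalLeftIdeal S I}.encard = n)
    (hunion : ⋃₀ {I : Set S | IsMinimalLeftIdeal S I} = Set.univ) :
    Nonempty (((idealGraph S) ≃g (idealGraph S)) ≃* Equiv.Perm (Fin n)) ∧
      Nat.card ((idealGraph S) ≃g (idealGraph S)) = n.factorial := by
  have : Finite (MinimalLeftIdeal S) := (finite_of_encard_eq_coe hcard).to_subtype
  have hn : Nat.card (MinimalLeftIdeal S) = n := by
    change Nat.card {I : Set S | IsMinimalLeftIdeal S I} = n
    rw [Nat.card_coe_set_eq, ncard_def, hcard, ENat.toNat_natCast]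
  let e : ((idealGraph S) ≃g (idealGraph S)) ≃* Equiv.Perm (Fin n) :=
    (MinimalLeftIdeal.idealGraphIso hunion).symm.autCongr.trans <|
      subsetIntersectionGraph.autEquivPerm.trans (Finite.equivFinOfCardEq hn).permCongrHom
  refine ⟨⟨e⟩, ?_⟩
  rw [Nat.card_congr e.toEquiv, Nat.card_perm, Nat.card_fin]

/-- If `S` is the union of its `n` minimal left ideals (`2 ≤ n < ∞`), then the
automorphism group of `Γ(S)` is isomorphic to the symmetric group of degree `n`;
in particular it has order `n!`. -/
theorem aut_idealGraph_iso_symmGroup (S : Type*) [Semigroup S] (n : ℕ) (hn : 2 ≤ n)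
    (hcard : {I : Set S | IsMinimalLeftIdeal S I}.encard = n)
    (hunion : ⋃₀ {I : Set S | IsMinimalLeftIdeal S I} = Set.univ) :
    Nonempty (((idealGraph S) ≃g (idealGraph S)) ≃* Equiv.Perm (Fin n)) ∧
      Nat.card ((idealGraph S) ≃g (idealGraph S)) = n.factorial :=
  aut_idealGraph_iso_symmGroup_general S n hcard hunion
end
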